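/- arXiv:math/0607499 — 4 statements merged into one kernel-verified Lean document; each statement's English description precedes it below -/
import Mathlib

section
/- For every δ ∈ ℝ, the travelling-rotating profile U_δ(t,x) = R_{δt}(M₀(x+δt)) is an exact solution of the Landau–Lifschitz equation with applied field δe₁: for all (t,x), ∂U_δ/∂t = −U_δ ∧ h_δ(U_δ) − U_δ ∧ (U_δ ∧ h_δ(U_δ)). -/
open Matrix

noncomputable section

def e1 : Fin 3 → ℝ := ![1, 0, 0]
def e2 : Fin 3 → ℝ := ![0, 1, 0]
def e3 : Fin 3 → ℝ := ![0, 0, 1]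

/-- The wall profile `M₀(x) = (tanh x, 0, 1/cosh x)`. -/
def M0 (x : ℝ) : Fin 3 → ℝ := ![Real.tanh x, 0, 1 / Real.cosh x]

/-- Rotation of angle `θ` around the axis `ℝe₁`. -/
def rot (θ : ℝ) (y : Fin 3 → ℝ) : Fin 3 → ℝ :=
  ![y 0, y 1 * Real.cos θ - y 2 * Real.sin θ, y 1 * Real.sin θ + y 2 * Real.cos θ]

/-- The travelling-rotating wall profile `U_δ(t,x) = R_{δt}(M₀(x + δt))`. -/
def Uprof (δ t x : ℝ) : Fin 3 → ℝ := rot (δ * t) (M0 (x + δ * t))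

/-- The effective field `h_δ(u) = ∂ₓₓu - u₂e₂ - u₃e₃ + δe₁` of a spatial profile `u : ℝ → ℝ³`. -/
def hEff (δ : ℝ) (u : ℝ → Fin 3 → ℝ) (x : ℝ) : Fin 3 → ℝ :=
  deriv (deriv u) x - u x 1 • e2 - u x 2 • e3 + δ • e1

private lemma hd_tanh (x : ℝ) : HasDerivAt Real.tanh (1 / Real.cosh x ^ 2) x := by
  have h := (Real.hasDerivAt_sinh x).div (Real.hasDerivAt_cosh x) (Real.cosh_pos x).ne'
  have he : Real.tanh = fun y => Real.sinh y / Real.cosh y :=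
    funext fun y => Real.tanh_eq_sinh_div_cosh y
  rw [he]
  refine h.congr_deriv ?_
  have h2 := Real.cosh_sq_sub_sinh_sq x
  field_simp
  nlinarith [h2]

private lemma hd_sech (x : ℝ) :
    HasDerivAt (fun y => 1 / Real.cosh y) (-(Real.sinh x / Real.cosh x ^ 2)) x := by
  have h := (hasDerivAt_const x (1:ℝ)).div (Real.hasDerivAt_cosh x) (Real.cosh_pos x).ne'
  refine h.congr_deriv ?_
  ring

private lemma hd_invcoshsq (x : ℝ) :
    HasDerivAt (fun y => 1 / Real.cosh y ^ 2) (-(2 * Real.sinh x / Real.cosh x ^ 3)) x := by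
  have hc := (Real.hasDerivAt_cosh x).pow 2
  have h := (hasDerivAt_const x (1:ℝ)).div hc (pow_ne_zero 2 (Real.cosh_pos x).ne')
  refine h.congr_deriv ?_
  have : Real.cosh x ≠ 0 := (Real.cosh_pos x).ne'
  simp only [Pi.pow_apply, Nat.cast_ofNat]
  field_simp
  ring

private lemma hd_sinhdivcoshsq (x : ℝ) :
    HasDerivAt (fun y => Real.sinh y / Real.cosh y ^ 2)
      ((Real.cosh x ^ 2 - 2 * Real.sinh x ^ 2) / Real.cosh x ^ 3) x := by
  have hc := (Real.hasDerivAt_cosh x).pow 2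
  have h := (Real.hasDerivAt_sinh x).div hc (pow_ne_zero 2 (Real.cosh_pos x).ne')
  refine h.congr_deriv ?_
  have : Real.cosh x ≠ 0 := (Real.cosh_pos x).ne'
  simp only [Pi.pow_apply, Nat.cast_ofNat]
  field_simp
  ring

private lemma hasDerivAt_vec3 {f1 f2 f3 : ℝ → ℝ} {a1 a2 a3 : ℝ} {x : ℝ}
    (h1 : HasDerivAt f1 a1 x) (h2 : HasDerivAt f2 a2 x) (h3 : HasDerivAt f3 a3 x) :
    HasDerivAt (fun y => (![f1 y, f2 y, f3 y] : Fin 3 → ℝ)) ![a1, a2, a3] x := by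
  apply hasDerivAt_pi.2
  intro i
  fin_cases i <;> simpa

set_option maxHeartbeats 1000000 in
/-- For every `δ`, the travelling-rotating profile `U_δ` is an exact solution of the
Landau–Lifschitz equation with applied field `δe₁`. -/
theorem Uprof_solves_LL (δ : ℝ) :
    ∀ t x : ℝ,
      deriv (fun s => Uprof δ s x) t =
        -(Uprof δ t x ⨯₃ hEff δ (Uprof δ t) x) -
          Uprof δ t x ⨯₃ (Uprof δ t x ⨯₃ hEff δ (Uprof δ t) x) := by
  intro t x
  have hcosh : ∀ y : ℝ, Real.cosh y ≠ 0 := fun y => (Real.cosh_pos y).ne'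
  -- explicit form of the profile (as functions of x and of t)
  have hUfun : ∀ t' : ℝ, Uprof δ t' = fun y =>
      (![Real.tanh (y + δ * t'), -(Real.sin (δ * t') * (1 / Real.cosh (y + δ * t'))),
        Real.cos (δ * t') * (1 / Real.cosh (y + δ * t'))] : Fin 3 → ℝ) := by
    intro t'
    funext y i
    fin_cases i <;> simp [Uprof, rot, M0] <;> ring
  -- spatial first derivative
  have hv : ∀ y : ℝ, HasDerivAt (Uprof δ t)
      (![1 / Real.cosh (y + δ * t) ^ 2,
        Real.sin (δ * t) * (Real.sinh (y + δ * t) / Real.cosh (y + δ * t) ^ 2),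
        -(Real.cos (δ * t) * (Real.sinh (y + δ * t) / Real.cosh (y + δ * t) ^ 2))]) y := by
    intro y
    rw [hUfun t]
    have hadd : HasDerivAt (fun y : ℝ => y + δ * t) 1 y := (hasDerivAt_id y).add_const _
    refine hasDerivAt_vec3 ?_ ?_ ?_
    · have := (hd_tanh (y + δ * t)).comp y hadd
      simpa [Function.comp_def] using this
    · have h := (((hd_sech (y + δ * t)).comp y hadd).const_mul (Real.sin (δ * t))).neg
      simp only [Function.comp, Pi.neg_def] at h
      convert h using 1
      all_goals first
        | ring
        | (funext z; ring)
        | rfl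
    · have h := ((hd_sech (y + δ * t)).comp y hadd).const_mul (Real.cos (δ * t))
      simp only [Function.comp] at h
      convert h using 1
      all_goals first
        | ring
        | (funext z; ring)
        | rfl
  have hderivU : deriv (Uprof δ t) = fun y =>
      (![1 / Real.cosh (y + δ * t) ^ 2,
        Real.sin (δ * t) * (Real.sinh (y + δ * t) / Real.cosh (y + δ * t) ^ 2),
        -(Real.cos (δ * t) * (Real.sinh (y + δ * t) / Real.cosh (y + δ * t) ^ 2))] :
        Fin 3 → ℝ) :=
    funext fun y => (hv y).deriv
  -- spatial second derivative
  have hv2 : HasDerivAt (deriv (Uprof δ t))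
      (![-(2 * Real.sinh (x + δ * t) / Real.cosh (x + δ * t) ^ 3),
        Real.sin (δ * t) *
          ((Real.cosh (x + δ * t) ^ 2 - 2 * Real.sinh (x + δ * t) ^ 2) /
            Real.cosh (x + δ * t) ^ 3),
        -(Real.cos (δ * t) *
          ((Real.cosh (x + δ * t) ^ 2 - 2 * Real.sinh (x + δ * t) ^ 2) /
            Real.cosh (x + δ * t) ^ 3))]) x := by
    rw [hderivU]
    have hadd : HasDerivAt (fun y : ℝ => y + δ * t) 1 x := (hasDerivAt_id x).add_const _
    refine hasDerivAt_vec3 ?_ ?_ ?_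
    · have := (hd_invcoshsq (x + δ * t)).comp x hadd
      simpa [Function.comp_def] using this
    · have h := ((hd_sinhdivcoshsq (x + δ * t)).comp x hadd).const_mul (Real.sin (δ * t))
      simp only [Function.comp] at h
      convert h using 1
      all_goals first
        | ring
        | (funext z; ring)
        | rfl
    · have h := (((hd_sinhdivcoshsq (x + δ * t)).comp x hadd).const_mul (Real.cos (δ * t))).neg
      simp only [Function.comp, Pi.neg_def] at h
      convert h using 1
      all_goals first
        | ring
        | (funext z; ring)
        | rfl
  have hderiv2 : deriv (deriv (Uprof δ t)) x =
      ![-(2 * Real.sinh (x + δ * t) / Real.cosh (x + δ * t) ^ 3),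
        Real.sin (δ * t) *
          ((Real.cosh (x + δ * t) ^ 2 - 2 * Real.sinh (x + δ * t) ^ 2) /
            Real.cosh (x + δ * t) ^ 3),
        -(Real.cos (δ * t) *
          ((Real.cosh (x + δ * t) ^ 2 - 2 * Real.sinh (x + δ * t) ^ 2) /
            Real.cosh (x + δ * t) ^ 3))] := hv2.deriv
  -- time derivative
  have hFfun : (fun s => Uprof δ s x) = fun s =>
      (![Real.tanh (x + δ * s), -(Real.sin (δ * s) * (1 / Real.cosh (x + δ * s))),
        Real.cos (δ * s) * (1 / Real.cosh (x + δ * s))] : Fin 3 → ℝ) := by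
    funext s
    rw [hUfun s]
  have haddt : HasDerivAt (fun s : ℝ => x + δ * s) δ t := by
    simpa using ((hasDerivAt_id t).const_mul δ).const_add x
  have hmul : HasDerivAt (fun s : ℝ => δ * s) δ t := by
    simpa using (hasDerivAt_id t).const_mul δ
  have hsin : HasDerivAt (fun s : ℝ => Real.sin (δ * s)) (Real.cos (δ * t) * δ) t :=
    (Real.hasDerivAt_sin (δ * t)).comp t hmul
  have hcos : HasDerivAt (fun s : ℝ => Real.cos (δ * s)) (-Real.sin (δ * t) * δ) t :=
    (Real.hasDerivAt_cos (δ * t)).comp t hmul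
  have hcosht : HasDerivAt (fun s : ℝ => Real.cosh (x + δ * s)) (Real.sinh (x + δ * t) * δ) t :=
    by have := (Real.hasDerivAt_cosh (x + δ * t)).comp t haddt; exact this
  have hF : HasDerivAt (fun s => Uprof δ s x)
      (![δ / Real.cosh (x + δ * t) ^ 2,
        δ * (Real.sin (δ * t) * Real.sinh (x + δ * t) - Real.cos (δ * t) * Real.cosh (x + δ * t)) /
          Real.cosh (x + δ * t) ^ 2,
        -(δ * (Real.cos (δ * t) * Real.sinh (x + δ * t) + Real.sin (δ * t) * Real.cosh (x + δ * t)) /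
          Real.cosh (x + δ * t) ^ 2)]) t := by
    rw [hFfun]
    refine hasDerivAt_vec3 ?_ ?_ ?_
    · have := (hd_tanh (x + δ * t)).comp t haddt
      refine this.congr_deriv ?_
      ring
    · have hsech : HasDerivAt (fun s : ℝ => 1 / Real.cosh (x + δ * s))
          (-(Real.sinh (x + δ * t) / Real.cosh (x + δ * t) ^ 2) * δ) t :=
        by have := (hd_sech (x + δ * t)).comp t haddt; exact this
      have h := (hsin.mul hsech).neg
      simp only [Function.comp, Pi.neg_def, Pi.mul_def] at h
      convert h using 1
      all_goals first
        | (field_simp; ring)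
        | (funext z; ring)
        | rfl
    · have hsech : HasDerivAt (fun s : ℝ => 1 / Real.cosh (x + δ * s))
          (-(Real.sinh (x + δ * t) / Real.cosh (x + δ * t) ^ 2) * δ) t :=
        by have := (hd_sech (x + δ * t)).comp t haddt; exact this
      have h := hcos.mul hsech
      simp only [Function.comp, Pi.mul_def] at h
      convert h using 1
      all_goals first
        | (field_simp; ring)
        | (funext z; ring)
        | rfl
  have hsq := Real.cosh_sq_sub_sinh_sq (x + δ * t)
  have hsc := Real.sin_sq_add_cos_sq (δ * t)
  have htanh := Real.tanh_eq_sinh_div_cosh (x + δ * t)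
  -- the effective field in closed form
  have hh : hEff δ (Uprof δ t) x =
      ![δ - 2 * Real.sinh (x + δ * t) / Real.cosh (x + δ * t) ^ 3,
        2 * Real.sin (δ * t) / Real.cosh (x + δ * t) ^ 3,
        -(2 * Real.cos (δ * t) / Real.cosh (x + δ * t) ^ 3)] := by
    rw [hEff, hderiv2, hUfun t]
    funext i
    fin_cases i
    · simp [e1, e2, e3]; field_simp; ring
    · simp [e1, e2, e3]; field_simp
      linear_combination (2 * Real.sin (δ * t)) * hsq
    · simp [e1, e2, e3]; field_simp
      linear_combination (-2 * Real.cos (δ * t)) * hsq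
  -- the first cross product in closed form
  have hcr1 : Uprof δ t x ⨯₃ hEff δ (Uprof δ t) x =
      ![0, δ * Real.cos (δ * t) / Real.cosh (x + δ * t),
        δ * Real.sin (δ * t) / Real.cosh (x + δ * t)] := by
    rw [hh, hUfun t]
    funext i
    fin_cases i <;>
      · simp [cross_apply, htanh]
        field_simp
        ring
  -- the second cross product in closed form
  have hcr2 : Uprof δ t x ⨯₃ (Uprof δ t x ⨯₃ hEff δ (Uprof δ t) x) =
      ![-(δ / Real.cosh (x + δ * t) ^ 2),
        -(δ * Real.sinh (x + δ * t) * Real.sin (δ * t) / Real.cosh (x + δ * t) ^ 2),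
        δ * Real.sinh (x + δ * t) * Real.cos (δ * t) / Real.cosh (x + δ * t) ^ 2] := by
    rw [hcr1, hUfun t]
    funext i
    fin_cases i
    · simp [cross_apply, htanh]; field_simp
      linear_combination (-δ) * hsc
    · simp [cross_apply, htanh]; field_simp
    · simp [cross_apply, htanh]; field_simp
  rw [hF.deriv, hcr2, hcr1]
  funext i
  fin_cases i <;> simp <;> (try field_simp) <;> (try ring)

end
end

section
/- The kernel of L (with domain H²(ℝ)) is one-dimensional, generated by x ↦ 1/cosh x: if f : ℝ → ℝ is twice continuously differentiable, square-integrable on ℝ, and satisfies −f''(x) + (2 tanh²x − 1) f(x) = 0 for all x ∈ ℝ, then there exists c ∈ ℝ such that f(x) = c/cosh x for all x. -/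
/-!
Both `f` and `sech = 1 / cosh` solve `u'' = (2 tanh² - 1) u`, so their Wronskian is a constant `c`.
Reduction of order then gives `(f cosh)' = c cosh²`, i.e. `f = f 0 · sech + (c / 2) (sinh + x sech)`.
The second solution grows like `sinh`, so square integrability forces `c = 0`.
-/

open MeasureTheory Real Filter

theorem wronskian_eq_of_hasDerivAt {q f f' g g' : ℝ → ℝ}
    (hg : ∀ x, HasDerivAt g (g' x) x) (hg' : ∀ x, HasDerivAt g' (q x * g x) x)
    (hf : ∀ x, HasDerivAt f (f' x) x) (hf' : ∀ x, HasDerivAt f' (q x * f x) x) (x : ℝ) :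
    g x * f' x - g' x * f x = g 0 * f' 0 - g' 0 * f 0 := by
  have hW : ∀ x, HasDerivAt (fun x => g x * f' x - g' x * f x) 0 x := fun x =>
    (((hg x).mul (hf' x)).sub ((hg' x).mul (hf x))).congr_deriv (by ring)
  exact is_const_of_deriv_eq_zero (fun y => (hW y).differentiableAt) (fun y => (hW y).deriv) x 0

theorem hasDerivAt_inv_cosh (x : ℝ) :
    HasDerivAt (fun x => (cosh x)⁻¹) (-sinh x / cosh x ^ 2) x :=
  (hasDerivAt_cosh x).inv (cosh_pos x).ne'

theorem hasDerivAt_neg_sinh_div_cosh_sq (x : ℝ) :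
    HasDerivAt (fun x => -sinh x / cosh x ^ 2) ((2 * tanh x ^ 2 - 1) * (cosh x)⁻¹) x := by
  have hc := (cosh_pos x).ne'
  refine ((hasDerivAt_sinh x).neg.div ((hasDerivAt_cosh x).pow 2) (pow_ne_zero 2 hc)).congr_deriv ?_
  rw [tanh_eq_sinh_div_cosh]
  simp only [Pi.pow_apply, Pi.neg_apply]
  field_simp
  ring

theorem eq_of_wronskian_inv_cosh {f f' : ℝ → ℝ} {c : ℝ} (hf : ∀ x, HasDerivAt f (f' x) x)
    (hw : ∀ x, (cosh x)⁻¹ * f' x - -sinh x / cosh x ^ 2 * f x = c) (x : ℝ) :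
    f x = f 0 / cosh x + c / 2 * (sinh x + x / cosh x) := by
  have hF : ∀ x, HasDerivAt (fun x => f x * cosh x - c * (sinh x * cosh x + x) / 2) 0 x :=
    fun x => by
    have hc := (cosh_pos x).ne'
    refine (((hf x).mul (hasDerivAt_cosh x)).sub
      ((((hasDerivAt_sinh x).mul (hasDerivAt_cosh x)).add (hasDerivAt_id x)).const_mul c
        |>.div_const 2)).congr_deriv ?_
    rw [← hw x]
    field_simp
    rw [cosh_sq]
    ring
  have hconst := is_const_of_deriv_eq_zero (fun y => (hF y).differentiableAt)
    (fun y => (hF y).deriv) x 0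
  have hc := (cosh_pos x).ne'
  simp only [cosh_zero, sinh_zero] at hconst
  field_simp
  linear_combination 2 * hconst

theorem not_integrable_of_tendsto_atTop {g : ℝ → ℝ} (h : Tendsto g atTop atTop) :
    ¬ Integrable g := by
  intro hg
  obtain ⟨A, hA⟩ := (h.eventually_ge_atTop 1).exists_forall_of_atTop
  have h1 : IntegrableOn (fun _ => (1 : ℝ)) (Set.Ici A) := by
    refine hg.integrableOn.mono' aestronglyMeasurable_const ?_
    filter_upwards [ae_restrict_mem measurableSet_Ici] with x hx
    simpa using hA x hx
  simp [integrableOn_const_iff, Real.volume_Ici] at h1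

theorem tendsto_sq_div_cosh_add_atTop (a : ℝ) {c : ℝ} (hc : c ≠ 0) :
    Tendsto (fun x => (a / cosh x + c * (sinh x + x / cosh x)) ^ 2) atTop atTop := by
  have hlin : Tendsto (fun x : ℝ => |c| * x + -|a|) atTop atTop :=
    tendsto_atTop_add_const_right _ _ (tendsto_id.const_mul_atTop (abs_pos.2 hc))
  have habs : Tendsto (fun x => |a / cosh x + c * (sinh x + x / cosh x)|) atTop atTop := by
    refine tendsto_atTop_mono' _ ?_ hlin
    filter_upwards [eventually_ge_atTop 0] with x hx
    have hcosh := one_le_cosh x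
    have hsinh : x ≤ sinh x := self_le_sinh_iff.2 hx
    have hψ : x ≤ sinh x + x / cosh x := by
      have : 0 ≤ x / cosh x := by positivity
      linarith
    calc |c| * x + -|a| ≤ |c * (sinh x + x / cosh x)| - |a / cosh x| := by
          rw [abs_mul, abs_of_nonneg (hx.trans hψ), abs_div, abs_of_pos (cosh_pos x)]
          have := div_le_self (abs_nonneg a) hcosh
          nlinarith [mul_le_mul_of_nonneg_left hψ (abs_nonneg c)]
      _ ≤ |c * (sinh x + x / cosh x) + a / cosh x| := abs_sub_abs_le_abs_add _ _
      _ = _ := by rw [add_comm]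
  simpa only [Function.comp_def, sq_abs] using (tendsto_pow_atTop two_ne_zero).comp habs

/-- The kernel of `L = -d²/dx² + (2 tanh² - 1)` on `H²(ℝ)` is one-dimensional,
generated by `x ↦ 1/cosh x`. -/
theorem ker_L_one_dimensional (f : ℝ → ℝ)
    (hf : ContDiff ℝ 2 f)
    (hL2 : Integrable (fun x => f x ^ 2))
    (hker : ∀ x : ℝ, -deriv (deriv f) x + (2 * Real.tanh x ^ 2 - 1) * f x = 0) :
    ∃ c : ℝ, ∀ x : ℝ, f x = c / Real.cosh x := by
  have hf₁ : ∀ x, HasDerivAt f (deriv f x) x :=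
    fun x => (hf.differentiable two_ne_zero x).hasDerivAt
  have hf₂ : ∀ x, HasDerivAt (deriv f) ((2 * tanh x ^ 2 - 1) * f x) x := fun x => by
    rw [← neg_add_eq_zero.1 (hker x)]
    exact (hf.differentiable_deriv_two x).hasDerivAt
  have hsol := eq_of_wronskian_inv_cosh hf₁
    (wronskian_eq_of_hasDerivAt hasDerivAt_inv_cosh hasDerivAt_neg_sinh_div_cosh_sq hf₁ hf₂)
  set w := (cosh 0)⁻¹ * deriv f 0 - -sinh 0 / cosh 0 ^ 2 * f 0
  rcases eq_or_ne w 0 with hw | hw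
  · exact ⟨f 0, fun x => by simpa [hw] using hsol x⟩
  · refine absurd hL2 (not_integrable_of_tendsto_atTop ?_)
    simpa only [← hsol] using tendsto_sq_div_cosh_add_atTop (f 0) (div_ne_zero hw two_ne_zero)
end

section
/- L has a spectral gap of size 1 above its kernel: for every compactly supported C² function f : ℝ → ℝ with ∫_ℝ f(x)/cosh x dx = 0, one has ∫_ℝ (f'(x)² + (2 tanh²x − 1) f(x)²) dx ≥ ∫_ℝ f(x)² dx. -/
/-!
Write `A = d/dx + tanh`, so that `L = A*A` with `A* = -d/dx + tanh`, while `AA* = 1 - d²/dx²`.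
Orthogonality to `1/cosh` (which spans `ker A`) is exactly what makes
`u x = cosh x * ∫_{-∞}^x f/cosh` compactly supported; it solves `u' = tanh·u + f`, i.e.
`f = -A*u`. Then `Af = -AA*u = u'' - u`, and pointwise
`(f'² + (2tanh² - 1)f²) - f² = (u + Af)² + u'² - Ψ'` with `Ψ = 2uf + tanh·(u² + f²)`
compactly supported; since `u + Af = u''`, integrating gives
`∫ (f'² + (2tanh² - 1)f²) - ∫ f² = ∫ (u''² + u'²) ≥ 0`.
-/

open MeasureTheory Real Set

theorem Real.hasDerivAt_tanh (x : ℝ) : HasDerivAt tanh (1 - tanh x ^ 2) x := by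
  rw [show tanh = fun y => sinh y / cosh y from funext tanh_eq_sinh_div_cosh]
  refine ((hasDerivAt_sinh x).fun_div (hasDerivAt_cosh x) (cosh_pos x).ne').congr_deriv ?_
  field_simp

@[fun_prop]
theorem Real.continuous_tanh : Continuous tanh :=
  continuous_iff_continuousAt.2 fun x => (hasDerivAt_tanh x).continuousAt

theorem exists_hasCompactSupport_hasDerivAt_of_integral_eq_zero
    {E : Type*} [NormedAddCommGroup E] [NormedSpace ℝ E] [CompleteSpace E]
    {g : ℝ → E} (hg : Continuous g) (hsupp : HasCompactSupport g) (hg0 : ∫ x, g x = 0) :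
    ∃ G : ℝ → E, HasCompactSupport G ∧ ∀ x, HasDerivAt G (g x) x := by
  obtain ⟨a, b, hab⟩ : ∃ a b, tsupport g ⊆ Icc a b :=
    ⟨_, _, hsupp.isCompact.isBounded.subset_Icc_sInf_sSup⟩
  refine ⟨fun x => ∫ t in (a - 1)..x, g t,
    HasCompactSupport.intro (isCompact_Icc (a := a - 1) (b := b)) fun x hx => ?_,
    fun x => (hg.integral_hasStrictDerivAt _ x).hasDerivAt⟩
  rw [mem_Icc, not_and_or, not_le, not_le] at hx
  rcases hx with hx | hx
  · rw [← intervalIntegral.integral_zero (a := a - 1) (b := x)]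
    refine intervalIntegral.integral_congr fun t ht => image_eq_zero_of_notMem_tsupport ?_
    rw [uIcc_of_ge hx.le] at ht
    exact fun h => by linarith [ht.2, (hab h).1]
  · rw [intervalIntegral.integral_eq_integral_of_support_subset, hg0]
    refine (subset_tsupport g).trans (hab.trans fun t ht => ⟨?_, ?_⟩) <;> linarith [ht.1, ht.2]

theorem hasDerivAt_flux {f u : ℝ → ℝ} {f' x : ℝ} (hf : HasDerivAt f f' x)
    (hu : HasDerivAt u (tanh x * u x + f x) x) :
    HasDerivAt (fun y => 2 * u y * f y + tanh y * (u y ^ 2 + f y ^ 2))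
      ((u x + f' + tanh x * f x) ^ 2 + (tanh x * u x + f x) ^ 2
        - (f' ^ 2 + (2 * tanh x ^ 2 - 1) * f x ^ 2 - f x ^ 2)) x := by
  refine (((hu.const_mul 2).fun_mul hf).fun_add
    ((hasDerivAt_tanh x).fun_mul ((hu.fun_pow 2).fun_add (hf.fun_pow 2)))).congr_deriv ?_
  push_cast
  ring

theorem integral_sq_le_of_hasDerivAt_eq_tanh_mul_add {f u : ℝ → ℝ} (hf : ContDiff ℝ 1 f)
    (hfs : HasCompactSupport f) (hus : HasCompactSupport u)
    (hu : ∀ x, HasDerivAt u (tanh x * u x + f x) x) :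
    (∫ x, f x ^ 2) ≤ ∫ x, (deriv f x ^ 2 + (2 * tanh x ^ 2 - 1) * f x ^ 2) := by
  have hf' x : HasDerivAt f (deriv f x) x := (hf.differentiable one_ne_zero x).hasDerivAt
  have hdf : Continuous (deriv f) := hf.continuous_deriv le_rfl
  have hu_cont : Continuous u := continuous_iff_continuousAt.2 fun x => (hu x).continuousAt
  have integrable_of_vanish (g : ℝ → ℝ) (hg : Continuous g)
      (hg0 : ∀ x, f x = 0 → deriv f x = 0 → u x = 0 → g x = 0) : Integrable g := by
    refine hg.integrable_of_hasCompactSupport <| HasCompactSupport.intro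
      (hfs.isCompact.union hus.isCompact) fun x hx => hg0 x ?_ ?_ ?_
    · exact image_eq_zero_of_notMem_tsupport fun h => hx (Or.inl h)
    · exact image_eq_zero_of_notMem_tsupport fun h => hx (Or.inl (tsupport_deriv_subset h))
    · exact image_eq_zero_of_notMem_tsupport fun h => hx (Or.inr h)
  set Q := fun x => deriv f x ^ 2 + (2 * tanh x ^ 2 - 1) * f x ^ 2
  set S := fun x => (u x + deriv f x + tanh x * f x) ^ 2 + (tanh x * u x + f x) ^ 2
  have hQ : Integrable Q :=
    integrable_of_vanish _ (by fun_prop) fun x h h' _ => by simp [Q, h, h']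
  have hf2 : Integrable fun x => f x ^ 2 :=
    integrable_of_vanish _ (by fun_prop) fun x h _ _ => by simp [h]
  have hS : Integrable S :=
    integrable_of_vanish _ (by fun_prop) fun x h h' h'' => by simp [S, h, h', h'']
  have hflux : ∫ x, (S x - (Q x - f x ^ 2)) = 0 :=
    integral_eq_zero_of_hasDerivAt_of_integrable (fun x => hasDerivAt_flux (hf' x) (hu x))
      (hS.sub (hQ.sub hf2)) (integrable_of_vanish _ (by fun_prop) fun x h _ h' => by simp [h, h'])
  have hS0 : 0 ≤ ∫ x, S x := integral_nonneg fun x => by positivity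
  have hsub₁ : ∫ x, (S x - (Q x - f x ^ 2)) = (∫ x, S x) - ∫ x, (Q x - f x ^ 2) :=
    integral_sub hS (hQ.sub hf2)
  have hsub₂ : ∫ x, (Q x - f x ^ 2) = (∫ x, Q x) - ∫ x, f x ^ 2 := integral_sub hQ hf2
  linarith

/-- Spectral gap of size `1` for `L` above its kernel: if `f` is compactly supported, `C²`,
and `L²`-orthogonal to `x ↦ 1/cosh x`, then `∫ (f'² + (2 tanh² - 1) f²) ≥ ∫ f²`. -/
theorem L_spectral_gap (f : ℝ → ℝ) (hf : ContDiff ℝ 2 f) (hsupp : HasCompactSupport f)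
    (horth : ∫ x : ℝ, f x / Real.cosh x = 0) :
    (∫ x : ℝ, f x ^ 2) ≤ ∫ x : ℝ, (deriv f x ^ 2 + (2 * Real.tanh x ^ 2 - 1) * f x ^ 2) := by
  have hc x : cosh x ≠ 0 := (cosh_pos x).ne'
  obtain ⟨G, hGs, hG⟩ := exists_hasCompactSupport_hasDerivAt_of_integral_eq_zero
    (g := fun x => f x / cosh x) (hf.continuous.div continuous_cosh hc)
    (hsupp.mono fun x hx h => hx (by simp [h])) horth
  refine integral_sq_le_of_hasDerivAt_eq_tanh_mul_add (u := fun x => cosh x * G x)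
    (hf.of_le one_le_two) hsupp hGs.mul_left fun x => ?_
  refine ((hasDerivAt_cosh x).fun_mul (hG x)).congr_deriv ?_
  rw [tanh_eq_sinh_div_cosh]
  field_simp
end

section
/- Schwarz-type comparison for the decay of the H¹ norm: let β > 0, K ≥ 1, and let w, m : [0,∞) → [0,∞) be continuous functions such that m is bounded by a constant ε ≥ 0 and for all t ≥ 0, w(t) ≤ K e^{−βt} w(0) + K ∫_0^t e^{−β(t−s)} (t−s)^{−1/2} w(s) m(s) ds + K ∫_0^t e^{−β(t−s)} w(s)² ds. Then, with G(t) = max_{s∈[0,t]} (1+s)² w(s), there exists a constant K' ≥ 1 depending only on β and K such that for all t ≥ 0, G(t) ≤ K' G(0) + K' ε G(t) + K' G(t)². -/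
open MeasureTheory intervalIntegral

/-- The running maximum `G(t) = max_{s ∈ [0,t]} (1+s)² w(s)`. -/
noncomputable def runMax (w : ℝ → ℝ) (t : ℝ) : ℝ :=
  sSup ((fun s => (1 + s) ^ 2 * w s) '' Set.Icc 0 t)

lemma Fint (b a c : ℝ) :
    IntervalIntegrable (fun r : ℝ => Real.exp (-(b * r)) * r ^ (-(1:ℝ)/2)) volume a c :=
  (intervalIntegrable_rpow' (by norm_num : (-1:ℝ) < -(1:ℝ)/2)).continuousOn_mul
    ((Real.continuous_exp.comp (continuous_const.mul continuous_id).neg).continuousOn)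

lemma exp_integral_le (b : ℝ) (hb : 0 < b) (a τ : ℝ) (ha : 0 ≤ a) (h : a ≤ τ) :
    ∫ x in a..τ, Real.exp (-(b * x)) ≤ 1 / b := by
  have h1 : (∫ x in a..τ, Real.exp (-(b * x))) = ∫ x in a..τ, Real.exp ((-b) * x) := by
    simp [neg_mul]
  rw [h1, integral_comp_mul_left Real.exp (by linarith : (-b) ≠ 0), integral_exp, smul_eq_mul]
  have e1 : Real.exp ((-b) * a) ≤ 1 := Real.exp_le_one_iff.2 (by nlinarith)
  have e2 : (0:ℝ) < Real.exp ((-b) * τ) := Real.exp_pos _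
  have hbi : (0:ℝ) < b⁻¹ := inv_pos.2 hb
  have hni : (-b)⁻¹ = -b⁻¹ := neg_inv.symm
  rw [hni, one_div]
  nlinarith

lemma smallJ (b : ℝ) (hb : 0 < b) (τ : ℝ) (hτ : 0 ≤ τ) (hτ1 : τ ≤ 1) :
    (∫ r in (0:ℝ)..τ, Real.exp (-(b * r)) * r ^ (-(1:ℝ)/2)) ≤ 2 := by
  have h1 : (∫ r in (0:ℝ)..τ, Real.exp (-(b * r)) * r ^ (-(1:ℝ)/2))
      ≤ ∫ r in (0:ℝ)..τ, r ^ (-(1:ℝ)/2) := by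
    apply integral_mono_on hτ (Fint b 0 τ)
      (intervalIntegrable_rpow' (by norm_num : (-1:ℝ) < -(1:ℝ)/2))
    intro x hx
    have hp : (0:ℝ) ≤ x ^ (-(1:ℝ)/2) := Real.rpow_nonneg hx.1 _
    have he : Real.exp (-(b * x)) ≤ 1 := Real.exp_le_one_iff.2 (by nlinarith [hx.1])
    nlinarith
  have h2 : (∫ r in (0:ℝ)..τ, r ^ (-(1:ℝ)/2))
      = (τ ^ (-(1:ℝ)/2 + 1) - (0:ℝ) ^ (-(1:ℝ)/2 + 1)) / (-(1:ℝ)/2 + 1) :=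
    integral_rpow (Or.inl (by norm_num))
  have h4 : τ ^ (-(1:ℝ)/2 + 1) ≤ 1 := Real.rpow_le_one hτ hτ1 (by norm_num)
  have h6 : (0:ℝ) ^ (-(1:ℝ)/2 + 1) = 0 := Real.zero_rpow (by norm_num)
  have h5 : (τ ^ (-(1:ℝ)/2 + 1) - (0:ℝ) ^ (-(1:ℝ)/2 + 1)) / (-(1:ℝ)/2 + 1) ≤ 2 := by
    rw [h6, sub_zero]
    have hp : (0:ℝ) ≤ τ ^ (-(1:ℝ)/2 + 1) := Real.rpow_nonneg hτ _
    have : (-(1:ℝ)/2 + 1) = 1/2 := by norm_num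
    rw [this, div_le_iff₀ (by norm_num : (0:ℝ) < 1/2)]
    linarith
  linarith [h2 ▸ h1]

lemma Jle (b : ℝ) (hb : 0 < b) (τ : ℝ) (hτ : 0 ≤ τ) :
    (∫ r in (0:ℝ)..τ, Real.exp (-(b * r)) * r ^ (-(1:ℝ)/2)) ≤ 2 + 1 / b := by
  have hbi : (0:ℝ) < 1 / b := by positivity
  rcases le_or_gt τ 1 with h | h
  · linarith [smallJ b hb τ hτ h]
  · have split : (∫ r in (0:ℝ)..1, Real.exp (-(b * r)) * r ^ (-(1:ℝ)/2))
        + (∫ r in (1:ℝ)..τ, Real.exp (-(b * r)) * r ^ (-(1:ℝ)/2))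
        = ∫ r in (0:ℝ)..τ, Real.exp (-(b * r)) * r ^ (-(1:ℝ)/2) :=
      integral_add_adjacent_intervals (Fint b 0 1) (Fint b 1 τ)
    have hA := smallJ b hb 1 (by norm_num) le_rfl
    have hB : (∫ r in (1:ℝ)..τ, Real.exp (-(b * r)) * r ^ (-(1:ℝ)/2))
        ≤ ∫ r in (1:ℝ)..τ, Real.exp (-(b * r)) := by
      apply integral_mono_on h.le (Fint b 1 τ)
        ((Continuous.intervalIntegrable (by continuity : Continuous fun x : ℝ => Real.exp (-(b * x))) 1 τ))
      intro x hx
      have hp : x ^ (-(1:ℝ)/2) ≤ 1 :=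
        Real.rpow_le_one_of_one_le_of_nonpos hx.1 (by norm_num)
      have he : (0:ℝ) ≤ Real.exp (-(b * x)) := (Real.exp_pos _).le
      nlinarith
    have hC := exp_integral_le b hb 1 τ (by norm_num) h.le
    linarith

lemma keyExp (β : ℝ) (hβ : 0 < β) {s τ : ℝ} (hs : 0 ≤ s) (hsτ : s ≤ τ) :
    Real.exp (-(β * (τ - s))) * (1 + τ) ^ 2
      ≤ (1 + 4 / β) ^ 2 * (Real.exp (-(β / 2 * (τ - s))) * (1 + s) ^ 2) := by
  set r := τ - s with hr
  have hr0 : 0 ≤ r := by simp [hr]; linarith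
  have hexp : Real.exp (-(β * r)) = Real.exp (-(β / 2 * r)) * Real.exp (-(β / 2 * r)) := by
    rw [← Real.exp_add]; ring_nf
  have h1 : 1 + τ ≤ (1 + s) * (1 + r) := by nlinarith
  have h2 : 1 + r ≤ (1 + 4 / β) * Real.exp (β / 4 * r) := by
    have he := Real.add_one_le_exp (β / 4 * r)
    have hb4 : (0:ℝ) < 4 / β := by positivity
    have hL : (1 + 4 / β) * (β / 4 * r + 1) = 1 + r + β / 4 * r + 4 / β := by
      field_simp; ring
    have hM : (1 + 4 / β) * (β / 4 * r + 1) ≤ (1 + 4 / β) * Real.exp (β / 4 * r) :=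
      mul_le_mul_of_nonneg_left he (by positivity)
    have hq : (0:ℝ) ≤ β / 4 * r := by positivity
    linarith
  have hsq : Real.exp (β / 4 * r) * Real.exp (β / 4 * r) = Real.exp (β / 2 * r) := by
    rw [← Real.exp_add]; ring_nf
  have h3 : (1 + τ) ^ 2 ≤ (1 + 4 / β) ^ 2 * Real.exp (β / 2 * r) * (1 + s) ^ 2 := by
    have hτ1 : (0:ℝ) ≤ 1 + τ := by linarith
    have hs1 : (0:ℝ) ≤ 1 + s := by linarith
    have hr1 : (0:ℝ) ≤ 1 + r := by linarith
    have hE : (0:ℝ) ≤ Real.exp (β / 4 * r) := (Real.exp_pos _).le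
    have c1 : (1 + τ) ^ 2 ≤ ((1 + s) * (1 + r)) ^ 2 := by nlinarith
    have c2 : (1 + r) ^ 2 ≤ ((1 + 4 / β) * Real.exp (β / 4 * r)) ^ 2 := by nlinarith
    calc (1 + τ) ^ 2 ≤ ((1 + s) * (1 + r)) ^ 2 := c1
      _ = (1 + s) ^ 2 * (1 + r) ^ 2 := by ring
      _ ≤ (1 + s) ^ 2 * ((1 + 4 / β) * Real.exp (β / 4 * r)) ^ 2 := by nlinarith
      _ = (1 + 4 / β) ^ 2 * (Real.exp (β / 4 * r) * Real.exp (β / 4 * r)) * (1 + s) ^ 2 := by ring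
      _ = (1 + 4 / β) ^ 2 * Real.exp (β / 2 * r) * (1 + s) ^ 2 := by rw [hsq]
  have hE2 : (0:ℝ) < Real.exp (-(β / 2 * r)) := Real.exp_pos _
  rw [hexp]
  have hmul : Real.exp (-(β / 2 * r)) * Real.exp (β / 2 * r) = 1 := by
    rw [← Real.exp_add]; simp
  have hmul2 := mul_le_mul_of_nonneg_left h3 (mul_nonneg hE2.le hE2.le)
  calc Real.exp (-(β / 2 * r)) * Real.exp (-(β / 2 * r)) * (1 + τ) ^ 2
      ≤ Real.exp (-(β / 2 * r)) * Real.exp (-(β / 2 * r))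
          * ((1 + 4 / β) ^ 2 * Real.exp (β / 2 * r) * (1 + s) ^ 2) := hmul2
    _ = (1 + 4 / β) ^ 2 * (Real.exp (-(β / 2 * r)) * (1 + s) ^ 2)
          * (Real.exp (-(β / 2 * r)) * Real.exp (β / 2 * r)) := by ring
    _ = (1 + 4 / β) ^ 2 * (Real.exp (-(β / 2 * r)) * (1 + s) ^ 2) := by rw [hmul, mul_one]

lemma keyExp4 (β : ℝ) (hβ : 0 < β) {s τ : ℝ} (hs : 0 ≤ s) (hsτ : s ≤ τ) :
    Real.exp (-(β * (τ - s))) * (1 + τ) ^ 4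
      ≤ (1 + 8 / β) ^ 4 * (Real.exp (-(β / 2 * (τ - s))) * (1 + s) ^ 4) := by
  set r := τ - s with hr
  have hr0 : 0 ≤ r := by simp [hr]; linarith
  have hexp : Real.exp (-(β * r)) = Real.exp (-(β / 2 * r)) * Real.exp (-(β / 2 * r)) := by
    rw [← Real.exp_add]; ring_nf
  have h1 : 1 + τ ≤ (1 + s) * (1 + r) := by nlinarith
  have h2 : 1 + r ≤ (1 + 8 / β) * Real.exp (β / 8 * r) := by
    have he := Real.add_one_le_exp (β / 8 * r)
    have hb8 : (0:ℝ) < 8 / β := by positivity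
    have hL : (1 + 8 / β) * (β / 8 * r + 1) = 1 + r + β / 8 * r + 8 / β := by
      field_simp; ring
    have hM : (1 + 8 / β) * (β / 8 * r + 1) ≤ (1 + 8 / β) * Real.exp (β / 8 * r) :=
      mul_le_mul_of_nonneg_left he (by positivity)
    have hq : (0:ℝ) ≤ β / 8 * r := by positivity
    linarith
  have hsq : Real.exp (β / 8 * r) ^ 4 = Real.exp (β / 2 * r) := by
    rw [← Real.exp_nat_mul]
    congr 1
    push_cast
    ring
  have hτ1 : (0:ℝ) ≤ 1 + τ := by linarith
  have hs1 : (0:ℝ) ≤ 1 + s := by linarith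
  have hr1 : (0:ℝ) ≤ 1 + r := by linarith
  have hE : (0:ℝ) ≤ Real.exp (β / 8 * r) := (Real.exp_pos _).le
  have h3 : (1 + τ) ^ 4 ≤ (1 + 8 / β) ^ 4 * Real.exp (β / 2 * r) * (1 + s) ^ 4 := by
    have c1 : (1 + τ) ^ 4 ≤ ((1 + s) * (1 + r)) ^ 4 :=
      pow_le_pow_left₀ hτ1 h1 4
    have c2 : (1 + r) ^ 4 ≤ ((1 + 8 / β) * Real.exp (β / 8 * r)) ^ 4 :=
      pow_le_pow_left₀ hr1 h2 4
    calc (1 + τ) ^ 4 ≤ ((1 + s) * (1 + r)) ^ 4 := c1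
      _ = (1 + s) ^ 4 * (1 + r) ^ 4 := by ring
      _ ≤ (1 + s) ^ 4 * ((1 + 8 / β) * Real.exp (β / 8 * r)) ^ 4 :=
          mul_le_mul_of_nonneg_left c2 (by positivity)
      _ = (1 + 8 / β) ^ 4 * Real.exp (β / 8 * r) ^ 4 * (1 + s) ^ 4 := by ring
      _ = (1 + 8 / β) ^ 4 * Real.exp (β / 2 * r) * (1 + s) ^ 4 := by rw [hsq]
  have hE2 : (0:ℝ) < Real.exp (-(β / 2 * r)) := Real.exp_pos _
  rw [hexp]
  have hmul : Real.exp (-(β / 2 * r)) * Real.exp (β / 2 * r) = 1 := by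
    rw [← Real.exp_add]; simp
  have hmul2 := mul_le_mul_of_nonneg_left h3 (mul_nonneg hE2.le hE2.le)
  calc Real.exp (-(β / 2 * r)) * Real.exp (-(β / 2 * r)) * (1 + τ) ^ 4
      ≤ Real.exp (-(β / 2 * r)) * Real.exp (-(β / 2 * r))
          * ((1 + 8 / β) ^ 4 * Real.exp (β / 2 * r) * (1 + s) ^ 4) := hmul2
    _ = (1 + 8 / β) ^ 4 * (Real.exp (-(β / 2 * r)) * (1 + s) ^ 4)
          * (Real.exp (-(β / 2 * r)) * Real.exp (β / 2 * r)) := by ring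
    _ = (1 + 8 / β) ^ 4 * (Real.exp (-(β / 2 * r)) * (1 + s) ^ 4) := by rw [hmul, mul_one]


lemma runMax_zero' (w : ℝ → ℝ) : runMax w 0 = w 0 := by
  unfold runMax
  rw [Set.Icc_self, Set.image_singleton, csSup_singleton]
  norm_num

lemma Fsubint (b τ : ℝ) :
    IntervalIntegrable (fun x : ℝ => Real.exp (-(b * (τ - x))) * (τ - x) ^ (-(1:ℝ)/2))
      volume 0 τ := by
  have h := (Fint b 0 τ).comp_sub_left τ
  simpa using h.symm

lemma Fsubeq (b τ : ℝ) :
    (∫ x in (0:ℝ)..τ, Real.exp (-(b * (τ - x))) * (τ - x) ^ (-(1:ℝ)/2))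
      = ∫ r in (0:ℝ)..τ, Real.exp (-(b * r)) * r ^ (-(1:ℝ)/2) := by
  have h := integral_comp_sub_left (a := 0) (b := τ)
    (fun r : ℝ => Real.exp (-(b * r)) * r ^ (-(1:ℝ)/2)) τ
  simpa using h

lemma Esubeq (b τ : ℝ) :
    (∫ x in (0:ℝ)..τ, Real.exp (-(b * (τ - x))))
      = ∫ r in (0:ℝ)..τ, Real.exp (-(b * r)) := by
  have h := integral_comp_sub_left (a := 0) (b := τ)
    (fun r : ℝ => Real.exp (-(b * r))) τ
  simpa using h

set_option maxHeartbeats 2000000 in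
/-- **Schwarz-type comparison for the decay of the `H¹` norm.** If `w, m : [0,∞) → [0,∞)`
are continuous, `m ≤ ε`, and `w` satisfies the Duhamel-type inequality
`w(t) ≤ K e^{-βt} w(0) + K ∫₀ᵗ e^{-β(t-s)} (t-s)^{-1/2} w(s) m(s) ds
      + K ∫₀ᵗ e^{-β(t-s)} w(s)² ds`,
then for `G(t) = max_{[0,t]} (1+s)² w(s)` there is `K' ≥ 1`, depending only on `β` and `K`,
such that `G(t) ≤ K' G(0) + K' ε G(t) + K' G(t)²` for all `t ≥ 0`. -/
theorem schwarz_comparison_decay (β K : ℝ) (hβ : 0 < β) (hK : 1 ≤ K) :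
    ∃ K' : ℝ, 1 ≤ K' ∧
      ∀ (w m : ℝ → ℝ) (ε : ℝ), 0 ≤ ε →
        ContinuousOn w (Set.Ici 0) → ContinuousOn m (Set.Ici 0) →
        (∀ t : ℝ, 0 ≤ t → 0 ≤ w t) → (∀ t : ℝ, 0 ≤ t → 0 ≤ m t) →
        (∀ t : ℝ, 0 ≤ t → m t ≤ ε) →
        (∀ t : ℝ, 0 ≤ t →
          w t ≤ K * Real.exp (-(β * t)) * w 0
              + K * ∫ s in (0 : ℝ)..t,
                  Real.exp (-(β * (t - s))) * (t - s) ^ (-(1 : ℝ) / 2) * (w s * m s)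
              + K * ∫ s in (0 : ℝ)..t, Real.exp (-(β * (t - s))) * w s ^ 2) →
        ∀ t : ℝ, 0 ≤ t →
          runMax w t ≤ K' * runMax w 0 + K' * ε * runMax w t + K' * runMax w t ^ 2 := by
  have hC₁1 : (1:ℝ) ≤ (1 + 4 / β) ^ 2 := by nlinarith [div_pos (by norm_num : (0:ℝ) < 4) hβ]
  have hb8 : (0:ℝ) < 8 / β := by positivity
  have h18 : (1:ℝ) ≤ 1 + 8 / β := by linarith
  have hC₄1 : (1:ℝ) ≤ (1 + 8 / β) ^ 4 := by
    have := pow_le_pow_left₀ zero_le_one h18 4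
    simpa using this
  have hβ2 : (0:ℝ) < 1 / (β / 2) := by positivity
  have hC₂1 : (1:ℝ) ≤ 2 + 1 / (β / 2) := by linarith
  have hK2 : (1:ℝ) ≤ K ^ 2 := by nlinarith
  have hKC : (1:ℝ) ≤ K ^ 2 * (1 + 8 / β) ^ 4 := by nlinarith
  refine ⟨K ^ 2 * (1 + 8 / β) ^ 4 * (2 + 1 / (β / 2)), by nlinarith, ?_⟩
  intro w m ε hε hcw hcm hw0 hm0 hmε hw t ht
  set C₁ : ℝ := (1 + 4 / β) ^ 2 with hC₁
  set C₄ : ℝ := (1 + 8 / β) ^ 4 with hC₄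
  set C₂ : ℝ := 2 + 1 / (β / 2) with hC₂
  set G : ℝ := runMax w t with hGdef
  have hC₁0 : (0:ℝ) < C₁ := by positivity
  have hC₄0 : (0:ℝ) < C₄ := by positivity
  have hK0 : (0:ℝ) ≤ K := by linarith
  have hC₁C₄ : C₁ ≤ C₄ := by
    have hbase : (1:ℝ) + 4 / β ≤ 1 + 8 / β := by
      have h48 : (4:ℝ) / β ≤ 8 / β := by gcongr <;> norm_num
      linarith
    have hp2 : ((1:ℝ) + 4 / β) ^ 2 ≤ (1 + 8 / β) ^ 2 :=
      pow_le_pow_left₀ (by positivity) hbase 2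
    have hp4 : ((1:ℝ) + 8 / β) ^ 2 ≤ (1 + 8 / β) ^ 4 :=
      pow_le_pow_right₀ h18 (by norm_num)
    calc C₁ = (1 + 4 / β) ^ 2 := hC₁
      _ ≤ (1 + 8 / β) ^ 2 := hp2
      _ ≤ (1 + 8 / β) ^ 4 := hp4
  have hcont : ContinuousOn (fun s => (1 + s) ^ 2 * w s) (Set.Icc 0 t) :=
    (((continuous_const.add continuous_id).pow 2).continuousOn).mul
      (hcw.mono Set.Icc_subset_Ici_self)
  have hbdd : BddAbove ((fun s => (1 + s) ^ 2 * w s) '' Set.Icc 0 t) :=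
    (isCompact_Icc.image_of_continuousOn hcont).bddAbove
  have hmemG : ∀ s : ℝ, 0 ≤ s → s ≤ t → (1 + s) ^ 2 * w s ≤ G := fun s h1 h2 =>
    le_csSup hbdd ⟨s, ⟨h1, h2⟩, rfl⟩
  have hGnn : 0 ≤ G := by
    have h0 : (0:ℝ) ≤ (1 + 0) ^ 2 * w 0 := by nlinarith [hw0 0 le_rfl]
    linarith [hmemG 0 le_rfl ht]
  have hw00 : 0 ≤ w 0 := hw0 0 le_rfl
  -- key pointwise bound for each τ ∈ [0, t]
  have main : ∀ τ : ℝ, 0 ≤ τ → τ ≤ t →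
      (1 + τ) ^ 2 * w τ
        ≤ K * C₁ * w 0 + K * (C₁ * C₂ * (ε * G))
          + K ^ 2 * (C₄ * (1 / (β / 2)) * G ^ 2) := by
    intro τ hτ0 hτt
    have hτ2 : (0:ℝ) ≤ (1 + τ) ^ 2 := by positivity
    -- Term 1 : exponential decay of the linear part
    have hk0 := keyExp β hβ (le_refl 0) hτ0
    have hk0' : Real.exp (-(β * τ)) * (1 + τ) ^ 2 ≤ C₁ := by
      have h1 : Real.exp (-(β / 2 * (τ - 0))) * (1 + 0) ^ 2 ≤ 1 := by
        have := Real.exp_le_one_iff.2 (by nlinarith : -(β / 2 * (τ - 0)) ≤ 0)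
        nlinarith
      have h2 := mul_le_mul_of_nonneg_left h1 hC₁0.le
      simp only [sub_zero] at hk0 h2 ⊢
      calc Real.exp (-(β * τ)) * (1 + τ) ^ 2
          ≤ C₁ * (Real.exp (-(β / 2 * τ)) * (1 + 0) ^ 2) := hk0
        _ ≤ C₁ * 1 := h2
        _ = C₁ := mul_one _
    have hT1 : (1 + τ) ^ 2 * (K * Real.exp (-(β * τ)) * w 0) ≤ K * C₁ * w 0 := by
      calc (1 + τ) ^ 2 * (K * Real.exp (-(β * τ)) * w 0)
          = (Real.exp (-(β * τ)) * (1 + τ) ^ 2) * (K * w 0) := by ring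
        _ ≤ C₁ * (K * w 0) :=
            mul_le_mul_of_nonneg_right hk0' (by positivity)
        _ = K * C₁ * w 0 := by ring
    -- the quadratic integral I₂, with fourth-power decay
    have hI₂nn : 0 ≤ ∫ s in (0:ℝ)..τ, Real.exp (-(β * (τ - s))) * w s ^ 2 := by
      apply intervalIntegral.integral_nonneg hτ0
      intro u hu
      positivity
    have hT3 : (1 + τ) ^ 4 * (∫ s in (0:ℝ)..τ, Real.exp (-(β * (τ - s))) * w s ^ 2)
        ≤ C₄ * (1 / (β / 2)) * G ^ 2 := by
      by_cases hint : IntervalIntegrable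
          (fun s => Real.exp (-(β * (τ - s))) * w s ^ 2) volume 0 τ
      · have hptwise : ∀ x ∈ Set.Icc (0:ℝ) τ,
            (1 + τ) ^ 4 * (Real.exp (-(β * (τ - x))) * w x ^ 2)
              ≤ (C₄ * G ^ 2) * Real.exp (-(β / 2 * (τ - x))) := by
          intro x hx
          have hx0 : (0:ℝ) ≤ x := hx.1
          have hxτ : x ≤ τ := hx.2
          have hxt : x ≤ t := le_trans hxτ hτt
          have hk := keyExp4 β hβ hx0 hxτ
          have hGx : (1 + x) ^ 2 * w x ≤ G := hmemG x hx0 hxt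
          have hGsq : (1 + x) ^ 4 * w x ^ 2 ≤ G ^ 2 := by
            have h1 : (1 + x) ^ 4 * w x ^ 2 = ((1 + x) ^ 2 * w x) ^ 2 := by ring
            rw [h1]
            exact pow_le_pow_left₀ (mul_nonneg (by positivity) (hw0 x hx0)) hGx 2
          calc (1 + τ) ^ 4 * (Real.exp (-(β * (τ - x))) * w x ^ 2)
              = (Real.exp (-(β * (τ - x))) * (1 + τ) ^ 4) * w x ^ 2 := by ring
            _ ≤ (C₄ * (Real.exp (-(β / 2 * (τ - x))) * (1 + x) ^ 4)) * w x ^ 2 :=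
                mul_le_mul_of_nonneg_right hk (sq_nonneg _)
            _ = (C₄ * Real.exp (-(β / 2 * (τ - x)))) * ((1 + x) ^ 4 * w x ^ 2) := by ring
            _ ≤ (C₄ * Real.exp (-(β / 2 * (τ - x)))) * G ^ 2 :=
                mul_le_mul_of_nonneg_left hGsq (by positivity)
            _ = (C₄ * G ^ 2) * Real.exp (-(β / 2 * (τ - x))) := by ring
        have hEint : IntervalIntegrable (fun x : ℝ => Real.exp (-(β / 2 * (τ - x))))
            volume 0 τ :=
          Continuous.intervalIntegrable
            (Real.continuous_exp.comp
              ((continuous_const.mul (continuous_const.sub continuous_id)).neg)) 0 τ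
        have hmono := integral_mono_on hτ0 (hint.const_mul ((1 + τ) ^ 4))
          (hEint.const_mul (C₄ * G ^ 2)) hptwise
        calc (1 + τ) ^ 4 * (∫ s in (0:ℝ)..τ, Real.exp (-(β * (τ - s))) * w s ^ 2)
            = ∫ s in (0:ℝ)..τ, (1 + τ) ^ 4 * (Real.exp (-(β * (τ - s))) * w s ^ 2) :=
              (intervalIntegral.integral_const_mul _ _).symm
          _ ≤ ∫ s in (0:ℝ)..τ, (C₄ * G ^ 2) * Real.exp (-(β / 2 * (τ - s))) := hmono
          _ = (C₄ * G ^ 2) * ∫ s in (0:ℝ)..τ, Real.exp (-(β / 2 * (τ - s))) :=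
              intervalIntegral.integral_const_mul _ _
          _ = (C₄ * G ^ 2) * ∫ r in (0:ℝ)..τ, Real.exp (-(β / 2 * r)) := by rw [Esubeq]
          _ ≤ (C₄ * G ^ 2) * (1 / (β / 2)) :=
              mul_le_mul_of_nonneg_left
                (exp_integral_le (β / 2) (by positivity) 0 τ le_rfl hτ0) (by positivity)
          _ = C₄ * (1 / (β / 2)) * G ^ 2 := by ring
      · rw [intervalIntegral.integral_undef hint, mul_zero]
        positivity
    -- Term 2 : the mixed integral (whose body also contains the constant K * I₂)
    set I₂ : ℝ := ∫ s in (0:ℝ)..τ, Real.exp (-(β * (τ - s))) * w s ^ 2 with hI₂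
    have hT2 : (1 + τ) ^ 2 *
        (∫ s in (0:ℝ)..τ, Real.exp (-(β * (τ - s))) * (τ - s) ^ (-(1:ℝ) / 2) * (w s * m s))
        ≤ C₁ * C₂ * (ε * G) := by
      by_cases hint : IntervalIntegrable
          (fun s => Real.exp (-(β * (τ - s))) * (τ - s) ^ (-(1:ℝ) / 2) * (w s * m s))
          volume 0 τ
      · have hptwise : ∀ x ∈ Set.Icc (0:ℝ) τ,
            (1 + τ) ^ 2 * (Real.exp (-(β * (τ - x))) * (τ - x) ^ (-(1:ℝ) / 2) * (w x * m x))
              ≤ (C₁ * ε * G) * (Real.exp (-(β / 2 * (τ - x))) * (τ - x) ^ (-(1:ℝ) / 2)) := by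
          intro x hx
          have hx0 : (0:ℝ) ≤ x := hx.1
          have hxτ : x ≤ τ := hx.2
          have hxt : x ≤ t := le_trans hxτ hτt
          have hP : (0:ℝ) ≤ (τ - x) ^ (-(1:ℝ) / 2) := Real.rpow_nonneg (by linarith) _
          have hk := keyExp β hβ hx0 hxτ
          have hwm : 0 ≤ w x * m x := mul_nonneg (hw0 x hx0) (hm0 x hx0)
          have hGx : (1 + x) ^ 2 * w x ≤ G := hmemG x hx0 hxt
          have hmx : m x ≤ ε := hmε x hx0
          calc (1 + τ) ^ 2 * (Real.exp (-(β * (τ - x))) * (τ - x) ^ (-(1:ℝ) / 2) * (w x * m x))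
              = (Real.exp (-(β * (τ - x))) * (1 + τ) ^ 2)
                  * ((τ - x) ^ (-(1:ℝ) / 2) * (w x * m x)) := by ring
            _ ≤ (C₁ * (Real.exp (-(β / 2 * (τ - x))) * (1 + x) ^ 2))
                  * ((τ - x) ^ (-(1:ℝ) / 2) * (w x * m x)) :=
                mul_le_mul_of_nonneg_right hk (mul_nonneg hP hwm)
            _ = (C₁ * Real.exp (-(β / 2 * (τ - x))) * (τ - x) ^ (-(1:ℝ) / 2))
                  * (((1 + x) ^ 2 * w x) * m x) := by ring
            _ ≤ (C₁ * Real.exp (-(β / 2 * (τ - x))) * (τ - x) ^ (-(1:ℝ) / 2)) * (G * ε) :=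
                mul_le_mul_of_nonneg_left (mul_le_mul hGx hmx (hm0 x hx0) hGnn)
                  (by positivity)
            _ = (C₁ * ε * G) * (Real.exp (-(β / 2 * (τ - x))) * (τ - x) ^ (-(1:ℝ) / 2)) := by
                ring
        have hmono := integral_mono_on hτ0 (hint.const_mul ((1 + τ) ^ 2))
          ((Fsubint (β / 2) τ).const_mul (C₁ * ε * G)) hptwise
        calc (1 + τ) ^ 2 *
            (∫ s in (0:ℝ)..τ, Real.exp (-(β * (τ - s))) * (τ - s) ^ (-(1:ℝ) / 2) * (w s * m s))
            = ∫ s in (0:ℝ)..τ, (1 + τ) ^ 2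
                * (Real.exp (-(β * (τ - s))) * (τ - s) ^ (-(1:ℝ) / 2) * (w s * m s)) :=
              (intervalIntegral.integral_const_mul _ _).symm
          _ ≤ ∫ s in (0:ℝ)..τ,
                (C₁ * ε * G) * (Real.exp (-(β / 2 * (τ - s))) * (τ - s) ^ (-(1:ℝ) / 2)) := hmono
          _ = (C₁ * ε * G) * ∫ s in (0:ℝ)..τ,
                Real.exp (-(β / 2 * (τ - s))) * (τ - s) ^ (-(1:ℝ) / 2) :=
              intervalIntegral.integral_const_mul _ _
          _ = (C₁ * ε * G) * ∫ r in (0:ℝ)..τ, Real.exp (-(β / 2 * r)) * r ^ (-(1:ℝ) / 2) := by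
              rw [Fsubeq]
          _ ≤ (C₁ * ε * G) * C₂ :=
              mul_le_mul_of_nonneg_left (Jle (β / 2) (by positivity) τ hτ0) (by positivity)
          _ = C₁ * C₂ * (ε * G) := by ring
      · rw [intervalIntegral.integral_undef hint, mul_zero]
        positivity
    -- assemble, dealing with the actual parenthesization of the hypothesis
    have hwτ := hw τ hτ0
    by_cases hint : IntervalIntegrable
        (fun s => Real.exp (-(β * (τ - s))) * (τ - s) ^ (-(1:ℝ) / 2) * (w s * m s))
        volume 0 τ
    · have hsplit : (∫ s in (0:ℝ)..τ,
          (Real.exp (-(β * (τ - s))) * (τ - s) ^ (-(1:ℝ) / 2) * (w s * m s) + K * I₂))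
          = (∫ s in (0:ℝ)..τ,
              Real.exp (-(β * (τ - s))) * (τ - s) ^ (-(1:ℝ) / 2) * (w s * m s))
            + τ * (K * I₂) := by
        rw [intervalIntegral.integral_add hint (intervalIntegrable_const)]
        rw [intervalIntegral.integral_const, smul_eq_mul, sub_zero]
      rw [hsplit] at hwτ
      have hττ : τ * (1 + τ) ^ 2 ≤ (1 + τ) ^ 4 := by
        nlinarith [sq_nonneg (1 + τ), mul_nonneg (sq_nonneg (1 + τ)) hτ0,
          mul_nonneg (sq_nonneg (1 + τ)) (sq_nonneg τ)]
      have hthird : K ^ 2 * (τ * ((1 + τ) ^ 2 * I₂))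
          ≤ K ^ 2 * (C₄ * (1 / (β / 2)) * G ^ 2) := by
        apply mul_le_mul_of_nonneg_left _ (by positivity)
        calc τ * ((1 + τ) ^ 2 * I₂) = (τ * (1 + τ) ^ 2) * I₂ := by ring
          _ ≤ (1 + τ) ^ 4 * I₂ := mul_le_mul_of_nonneg_right hττ hI₂nn
          _ ≤ C₄ * (1 / (β / 2)) * G ^ 2 := hT3
      calc (1 + τ) ^ 2 * w τ
          ≤ (1 + τ) ^ 2 * (K * Real.exp (-(β * τ)) * w 0
              + K * ((∫ s in (0:ℝ)..τ,
                  Real.exp (-(β * (τ - s))) * (τ - s) ^ (-(1:ℝ) / 2) * (w s * m s))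
                + τ * (K * I₂))) :=
            mul_le_mul_of_nonneg_left hwτ hτ2
        _ = (1 + τ) ^ 2 * (K * Real.exp (-(β * τ)) * w 0)
            + K * ((1 + τ) ^ 2 * (∫ s in (0:ℝ)..τ,
                Real.exp (-(β * (τ - s))) * (τ - s) ^ (-(1:ℝ) / 2) * (w s * m s)))
            + K ^ 2 * (τ * ((1 + τ) ^ 2 * I₂)) := by ring
        _ ≤ K * C₁ * w 0 + K * (C₁ * C₂ * (ε * G))
            + K ^ 2 * (C₄ * (1 / (β / 2)) * G ^ 2) := by
            have h2 := mul_le_mul_of_nonneg_left hT2 hK0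
            linarith
    · have hno : ¬ IntervalIntegrable
          (fun s => Real.exp (-(β * (τ - s))) * (τ - s) ^ (-(1:ℝ) / 2) * (w s * m s) + K * I₂)
          volume 0 τ := by
        intro h
        have := h.sub (_root_.intervalIntegrable_const (μ := volume) (c := K * I₂) (a := 0) (b := τ))
        apply hint
        simpa using this
      rw [intervalIntegral.integral_undef hno, mul_zero, add_zero] at hwτ
      have h1 := mul_le_mul_of_nonneg_left hwτ hτ2
      have h2 : (0:ℝ) ≤ K * (C₁ * C₂ * (ε * G)) := by positivity
      have h3 : (0:ℝ) ≤ K ^ 2 * (C₄ * (1 / (β / 2)) * G ^ 2) := by positivity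
      have h4 := h1.trans hT1
      exact h4.trans ((le_add_of_nonneg_right h2).trans (le_add_of_nonneg_right h3))
  -- conclude by taking the supremum
  have hne : ((fun s => (1 + s) ^ 2 * w s) '' Set.Icc 0 t).Nonempty :=
    ⟨_, ⟨0, ⟨le_rfl, ht⟩, rfl⟩⟩
  have hfinal : G ≤ K * C₁ * w 0 + K * (C₁ * C₂ * (ε * G))
      + K ^ 2 * (C₄ * (1 / (β / 2)) * G ^ 2) := by
    rw [hGdef]
    apply csSup_le hne
    rintro x ⟨τ, ⟨hτ0, hτt⟩, rfl⟩
    exact main τ hτ0 hτt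
  rw [runMax_zero' w]
  have hKK : K ≤ K ^ 2 := by nlinarith
  have ha1 : K * C₁ ≤ K ^ 2 * C₄ :=
    mul_le_mul hKK hC₁C₄ hC₁0.le (by positivity)
  have hc1 : K * C₁ ≤ K ^ 2 * C₄ * C₂ := by
    calc K * C₁ ≤ K ^ 2 * C₄ := ha1
      _ = K ^ 2 * C₄ * 1 := by ring
      _ ≤ K ^ 2 * C₄ * C₂ := by
          apply mul_le_mul_of_nonneg_left hC₂1
          positivity
  have hc2 : K * (C₁ * C₂) ≤ K ^ 2 * C₄ * C₂ := by
    calc K * (C₁ * C₂) = (K * C₁) * C₂ := by ring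
      _ ≤ (K ^ 2 * C₄) * C₂ := by
          apply mul_le_mul_of_nonneg_right ha1
          linarith only [hC₂1]
  have hc3 : K ^ 2 * (C₄ * (1 / (β / 2))) ≤ K ^ 2 * C₄ * C₂ := by
    have hβC : 1 / (β / 2) ≤ C₂ := by linarith only [hC₂]
    calc K ^ 2 * (C₄ * (1 / (β / 2))) = (K ^ 2 * C₄) * (1 / (β / 2)) := by ring
      _ ≤ (K ^ 2 * C₄) * C₂ := by
          apply mul_le_mul_of_nonneg_left hβC
          positivity
      _ = K ^ 2 * C₄ * C₂ := by ring
  have p1 : K * C₁ * w 0 ≤ K ^ 2 * C₄ * C₂ * w 0 :=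
    mul_le_mul_of_nonneg_right hc1 hw00
  have p2 : K * (C₁ * C₂ * (ε * G)) ≤ K ^ 2 * C₄ * C₂ * ε * G := by
    have := mul_le_mul_of_nonneg_right hc2 (mul_nonneg hε hGnn)
    calc K * (C₁ * C₂ * (ε * G)) = K * (C₁ * C₂) * (ε * G) := by ring
      _ ≤ K ^ 2 * C₄ * C₂ * (ε * G) := this
      _ = K ^ 2 * C₄ * C₂ * ε * G := by ring
  have p3 : K ^ 2 * (C₄ * (1 / (β / 2)) * G ^ 2) ≤ K ^ 2 * C₄ * C₂ * G ^ 2 := by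
    have := mul_le_mul_of_nonneg_right hc3 (sq_nonneg G)
    calc K ^ 2 * (C₄ * (1 / (β / 2)) * G ^ 2)
        = K ^ 2 * (C₄ * (1 / (β / 2))) * G ^ 2 := by ring
      _ ≤ K ^ 2 * C₄ * C₂ * G ^ 2 := this
  exact hfinal.trans (add_le_add (add_le_add p1 p2) p3)
end
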